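/- The controlled exterior reset of the pendulum on a cart satisfies the Weierstrass–Erdmann momentum condition: if p_x⁺ = -p_x⁻ + (2/ℓ)·cos(θ)·p_θ⁻ - 2v(M + m·sin²θ), then the momentum jump ε := p_x⁺ - p_x⁻ satisfies the energy balance H(θ, p_θ⁻, p_x⁻) - H(θ, p_θ⁻, p_x⁺) = ε·v, where H(θ, p_θ, p_x) = ((M+m)p_θ² - 2mℓ·cos(θ)·p_θ·p_x + mℓ²·p_x²)/(2mℓ²(M + m·sin²θ)) - mgℓ·cos(θ). -/

import Mathlib

/-! `H` is quadratic in `p_x`, so its increment between two momenta equals the increment times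
`∂H/∂p_x` at their midpoint. The reset law says exactly that this midpoint slope is `-v`, which
gives the energy balance. -/

noncomputable def cartHamiltonian (m M ℓ g θ pθ px : ℝ) : ℝ :=
  ((M + m) * pθ ^ 2 - 2 * m * ℓ * Real.cos θ * pθ * px + m * ℓ ^ 2 * px ^ 2) /
      (2 * m * ℓ ^ 2 * (M + m * Real.sin θ ^ 2)) -
    m * g * ℓ * Real.cos θ

section

variable (m M ℓ g θ pθ : ℝ)

theorem cartHamiltonian_sub_cartHamiltonian (px px' : ℝ) :
    cartHamiltonian m M ℓ g θ pθ px - cartHamiltonian m M ℓ g θ pθ px' =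
      (px - px') * (m * ℓ ^ 2 * (px + px') - 2 * m * ℓ * Real.cos θ * pθ) /
        (2 * m * ℓ ^ 2 * (M + m * Real.sin θ ^ 2)) := by
  unfold cartHamiltonian
  rw [sub_sub_sub_cancel_right, ← sub_div]
  ring

theorem midpoint_slope_of_reset {v px px' : ℝ} (hℓ : ℓ ≠ 0)
    (hreset : px' = -px + (2 / ℓ) * Real.cos θ * pθ - 2 * v * (M + m * Real.sin θ ^ 2)) :
    m * ℓ ^ 2 * (px + px') - 2 * m * ℓ * Real.cos θ * pθ =
      -(v * (2 * m * ℓ ^ 2 * (M + m * Real.sin θ ^ 2))) := by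
  subst hreset
  field_simp
  ring

end

/-- The controlled exterior reset satisfies the Weierstrass–Erdmann energy
balance. -/
theorem weierstrass_erdmann_energy_balance
    (m M ℓ g θ v pθm pxm pxp : ℝ) (hm : 0 < m) (hM : 0 < M) (hℓ : 0 < ℓ)
    (hreset : pxp = -pxm + (2 / ℓ) * Real.cos θ * pθm -
      2 * v * (M + m * Real.sin θ ^ 2)) :
    cartHamiltonian m M ℓ g θ pθm pxm - cartHamiltonian m M ℓ g θ pθm pxp =
      (pxp - pxm) * v := by
  have hdenom : 2 * m * ℓ ^ 2 * (M + m * Real.sin θ ^ 2) ≠ 0 := by positivity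
  rw [cartHamiltonian_sub_cartHamiltonian, midpoint_slope_of_reset m M ℓ θ pθm hℓ.ne' hreset]
  field_simp
  ring
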